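/- Suppose a nonnegative measurable function F on ℝⁿ and a countable family of cubes {Q} with positive weights satisfy, for all t > 0, ∫_{E} min(v(x), t) dx ≤ c Σ_Q |Q| min(t·2^{-s}, a_Q) where E is a measurable set, v is a positive locally integrable function, s is a positive integer, and a_Q ≥ 0. Then for every θ ∈ (0,1), ∫_E v(x)^{1-θ} dx ≤ c·c_θ·2^{-θs} Σ_Q |Q| a_Q^{1-θ}, where c_θ = ∫₀^∞ min(1,t) t^{-θ-1} dt. -/

import Mathlib

open MeasureTheory Set

lemma aux_int1 {θ : ℝ} (h0 : 0 < θ) (h1 : θ < 1) :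
    IntegrableOn (fun t : ℝ => min 1 t * t ^ (-θ - 1)) (Set.Ioi 0) := by
  have hsplit : Set.Ioi (0:ℝ) = Set.Ioc 0 1 ∪ Set.Ioi 1 :=
    (Set.Ioc_union_Ioi_eq_Ioi zero_le_one).symm
  rw [hsplit]
  apply IntegrableOn.union
  · have h2 : IntegrableOn (fun t : ℝ => t ^ (-θ)) (Set.Ioc 0 1) :=
      (integrableOn_Ioc_iff_integrableOn_Ioo).mpr
        ((intervalIntegral.integrableOn_Ioo_rpow_iff one_pos).mpr (by linarith))
    refine h2.congr_fun (fun t ht => ?_) measurableSet_Ioc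
    have ht0 : (0:ℝ) < t := ht.1
    rw [min_eq_right ht.2]
    nth_rewrite 2 [← Real.rpow_one t]
    rw [← Real.rpow_add ht0]
    ring_nf
  · have h2 : IntegrableOn (fun t : ℝ => t ^ (-θ - 1)) (Set.Ioi 1) :=
      integrableOn_Ioi_rpow_of_lt (by linarith) one_pos
    refine h2.congr_fun (fun t ht => ?_) measurableSet_Ioi
    rw [min_eq_left (le_of_lt ht), one_mul]

lemma aux_val1 {θ : ℝ} (h0 : 0 < θ) (h1 : θ < 1) :
    ∫ t in Set.Ioi (0:ℝ), min 1 t * t ^ (-θ - 1) = 1 / (1 - θ) + 1 / θ := by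
  have hsplit : Set.Ioi (0:ℝ) = Set.Ioc 0 1 ∪ Set.Ioi 1 :=
    (Set.Ioc_union_Ioi_eq_Ioi zero_le_one).symm
  have hI := aux_int1 h0 h1
  rw [hsplit] at hI
  rw [hsplit, setIntegral_union (Set.Ioc_disjoint_Ioi le_rfl) measurableSet_Ioi
    (hI.mono_set Set.subset_union_left) (hI.mono_set Set.subset_union_right)]
  have e1 : ∫ t in Set.Ioc (0:ℝ) 1, min 1 t * t ^ (-θ - 1) = 1 / (1 - θ) := by
    rw [setIntegral_congr_fun measurableSet_Ioc
      (g := fun t : ℝ => t ^ (-θ)) (fun t ht => by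
        rw [min_eq_right ht.2]
        nth_rewrite 1 [← Real.rpow_one t]
        rw [← Real.rpow_add ht.1]
        ring_nf)]
    rw [← intervalIntegral.integral_of_le zero_le_one,
      integral_rpow (Or.inl (by linarith))]
    rw [Real.one_rpow, Real.zero_rpow (by linarith : -θ + 1 ≠ 0)]
    ring_nf
  have e2 : ∫ t in Set.Ioi (1:ℝ), min 1 t * t ^ (-θ - 1) = 1 / θ := by
    rw [setIntegral_congr_fun measurableSet_Ioi
      (g := fun t : ℝ => t ^ (-θ - 1)) (fun t ht => by
        rw [min_eq_left (le_of_lt ht), one_mul])]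
    rw [integral_Ioi_rpow_of_lt (by linarith) one_pos, Real.one_rpow]
    ring_nf
  rw [e1, e2]

lemma aux_scale {θ b : ℝ} (h0 : 0 < θ) (h1 : θ < 1) (hb : 0 < b) :
    IntegrableOn (fun t : ℝ => min b t * t ^ (-θ - 1)) (Set.Ioi 0) ∧
    ∫ t in Set.Ioi (0:ℝ), min b t * t ^ (-θ - 1) =
      (∫ t in Set.Ioi (0:ℝ), min 1 t * t ^ (-θ - 1)) * b ^ (1 - θ) := by
  set K := ∫ t in Set.Ioi (0:ℝ), min 1 t * t ^ (-θ - 1) with hK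
  have key : ∀ x ∈ Set.Ioi (0:ℝ),
      min b (b * x) * (b * x) ^ (-θ - 1)
        = (b * b ^ (-θ - 1)) * (min 1 x * x ^ (-θ - 1)) := by
    intro x hx
    have hx0 : (0:ℝ) < x := hx
    rw [show min b (b * x) = b * min 1 x by
      rw [mul_min_of_nonneg _ _ hb.le, mul_one],
      Real.mul_rpow hb.le hx0.le]
    ring
  have hcomp : IntegrableOn
      (fun x : ℝ => min b (b * x) * (b * x) ^ (-θ - 1)) (Set.Ioi 0) := by
    refine IntegrableOn.congr_fun ((aux_int1 h0 h1).const_mul (b * b ^ (-θ - 1)))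
      (fun x hx => (key x hx).symm) measurableSet_Ioi
  have hi := integrableOn_Ioi_comp_mul_left_iff
    (fun t : ℝ => min b t * t ^ (-θ - 1)) 0 hb
  rw [mul_zero] at hi
  have hint : IntegrableOn (fun t : ℝ => min b t * t ^ (-θ - 1)) (Set.Ioi 0) :=
    hi.mp hcomp
  refine ⟨hint, ?_⟩
  have h2 := integral_comp_mul_left_Ioi
    (fun t : ℝ => min b t * t ^ (-θ - 1)) 0 hb
  rw [mul_zero, smul_eq_mul] at h2
  have h3 : (∫ x in Set.Ioi (0:ℝ), min b (b * x) * (b * x) ^ (-θ - 1))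
      = (b * b ^ (-θ - 1)) * K := by
    rw [setIntegral_congr_fun measurableSet_Ioi key, integral_const_mul]
  have hbb : b * (b * b ^ (-θ - 1)) = b ^ (1 - θ) := by
    nth_rewrite 1 [← Real.rpow_one b]
    nth_rewrite 2 [← Real.rpow_one b]
    rw [← Real.rpow_add hb, ← Real.rpow_add hb]
    ring_nf
  calc ∫ t in Set.Ioi (0:ℝ), min b t * t ^ (-θ - 1)
      = b * (b⁻¹ * ∫ t in Set.Ioi (0:ℝ), min b t * t ^ (-θ - 1)) :=
        (mul_inv_cancel_left₀ hb.ne' _).symm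
    _ = b * ((b * b ^ (-θ - 1)) * K) := by rw [← h2, h3]
    _ = (b * (b * b ^ (-θ - 1))) * K := by ring
    _ = b ^ (1 - θ) * K := by rw [hbb]
    _ = K * b ^ (1 - θ) := mul_comm _ _

lemma aux_scale2 {θ A aq : ℝ} (h0 : 0 < θ) (h1 : θ < 1) (hA : 0 < A) (haq : 0 ≤ aq) :
    IntegrableOn (fun t : ℝ => min (t * A) aq * t ^ (-θ - 1)) (Set.Ioi 0) ∧
    ∫ t in Set.Ioi (0:ℝ), min (t * A) aq * t ^ (-θ - 1) =
      A ^ θ * ((∫ t in Set.Ioi (0:ℝ), min 1 t * t ^ (-θ - 1)) * aq ^ (1 - θ)) := by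
  set K := ∫ t in Set.Ioi (0:ℝ), min 1 t * t ^ (-θ - 1) with hK
  rcases eq_or_lt_of_le haq with h | h
  · -- aq = 0
    have hz : ∀ t ∈ Set.Ioi (0:ℝ), min (t * A) aq * t ^ (-θ - 1) = 0 := by
      intro t ht
      have ht0 : (0:ℝ) < t := ht
      rw [← h, min_eq_right (by positivity : (0:ℝ) ≤ t * A), zero_mul]
    constructor
    · exact (integrableOn_zero).congr_fun (fun t ht => (hz t ht).symm) measurableSet_Ioi
    · rw [setIntegral_congr_fun measurableSet_Ioi hz, integral_zero, ← h,
        Real.zero_rpow (by linarith : (1:ℝ) - θ ≠ 0), mul_zero, mul_zero]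
  · -- 0 < aq
    have base := aux_scale h0 h1 h
    have key : ∀ x ∈ Set.Ioi (0:ℝ),
        min aq (A * x) * (A * x) ^ (-θ - 1)
          = A ^ (-θ - 1) * (min (x * A) aq * x ^ (-θ - 1)) := by
      intro x hx
      have hx0 : (0:ℝ) < x := hx
      rw [Real.mul_rpow hA.le hx0.le, min_comm, mul_comm A x]
      ring
    -- integrability
    have hcomp : IntegrableOn
        (fun x : ℝ => min aq (A * x) * (A * x) ^ (-θ - 1)) (Set.Ioi 0) := by
      have hi := integrableOn_Ioi_comp_mul_left_iff
        (fun t : ℝ => min aq t * t ^ (-θ - 1)) 0 hA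
      rw [mul_zero] at hi
      exact hi.mpr base.1
    have hint : IntegrableOn (fun t : ℝ => min (t * A) aq * t ^ (-θ - 1))
        (Set.Ioi 0) := by
      have h4 : IntegrableOn
          (fun x : ℝ => A ^ (-θ - 1) * (min (x * A) aq * x ^ (-θ - 1)))
          (Set.Ioi 0) :=
        hcomp.congr_fun key measurableSet_Ioi
      have h5 := h4.const_mul (A ^ (-θ - 1))⁻¹
      refine IntegrableOn.congr_fun h5 (fun x hx => ?_) measurableSet_Ioi
      field_simp
    refine ⟨hint, ?_⟩
    have h2 := integral_comp_mul_left_Ioi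
      (fun t : ℝ => min aq t * t ^ (-θ - 1)) 0 hA
    rw [mul_zero, smul_eq_mul, base.2] at h2
    have h3 : (∫ x in Set.Ioi (0:ℝ), min aq (A * x) * (A * x) ^ (-θ - 1))
        = A ^ (-θ - 1) * ∫ x in Set.Ioi (0:ℝ), min (x * A) aq * x ^ (-θ - 1) := by
      rw [setIntegral_congr_fun measurableSet_Ioi key, integral_const_mul]
    rw [h3] at h2
    have hAne : A ^ (-θ - 1) ≠ 0 := (Real.rpow_pos_of_pos hA _).ne'
    have hAA : A ^ (-θ - 1) * (A ^ θ * (K * aq ^ (1 - θ)))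
        = A⁻¹ * (K * aq ^ (1 - θ)) := by
      rw [← Real.rpow_neg_one A, ← mul_assoc, ← Real.rpow_add hA]
      ring_nf
    exact mul_left_cancel₀ hAne (h2.trans hAA.symm)

/-- Integrating the splitting inequality against `t^{-θ-1} dt`: from
`∫_E min(v,t) ≤ c Σ_Q |Q| min(t 2^{-s}, a_Q)` for all `t > 0` one deduces
`∫_E v^{1-θ} ≤ c c_θ 2^{-θs} Σ_Q |Q| a_Q^{1-θ}` with
`c_θ = ∫₀^∞ min(1,t) t^{-θ-1} dt`. -/
theorem stmt_15 (n : ℕ) (E : Set (EuclideanSpace ℝ (Fin n)))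
    (hE : MeasurableSet E) (v : EuclideanSpace ℝ (Fin n) → ℝ)
    (hv : ∀ x, 0 < v x) (hloc : LocallyIntegrable v volume)
    (c : ℝ) (hc : 0 ≤ c) (s : ℕ) (hs : 1 ≤ s)
    (vol a : ℕ → ℝ) (hvol : ∀ q, 0 ≤ vol q) (ha : ∀ q, 0 ≤ a q)
    (hyp : ∀ t > (0:ℝ),
      ∫ x in E, min (v x) t ≤
        c * ∑' q : ℕ, vol q * min (t * (2:ℝ) ^ (-(s : ℤ))) (a q))
    (θ : ℝ) (hθ : θ ∈ Set.Ioo (0:ℝ) 1)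
    (hint : IntegrableOn (fun x => v x ^ (1 - θ)) E volume)
    (hsum : Summable fun q : ℕ => vol q * a q ^ (1 - θ)) :
    ∫ x in E, v x ^ (1 - θ) ≤
      c * (∫ t in Set.Ioi (0:ℝ), min 1 t * t ^ (-θ - 1)) *
        (2:ℝ) ^ (-(θ * s)) * ∑' q : ℕ, vol q * a q ^ (1 - θ) := by
  obtain ⟨hθ0, hθ1⟩ := hθ
  have h1θ : (0:ℝ) < 1 - θ := by linarith
  set K := ∫ t in Set.Ioi (0:ℝ), min 1 t * t ^ (-θ - 1) with hKdef
  have hKval : K = 1 / (1 - θ) + 1 / θ := aux_val1 hθ0 hθ1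
  have hK1 : 1 ≤ K := by
    have h1 : (1:ℝ) ≤ 1 / θ := by rw [le_div_iff₀ hθ0]; linarith
    have h2 : (0:ℝ) < 1 / (1 - θ) := by positivity
    rw [hKval]; linarith
  have hKpos : (0:ℝ) < K := lt_of_lt_of_le one_pos hK1
  set A : ℝ := (2:ℝ) ^ (-(s:ℤ)) with hAdef
  have hA : (0:ℝ) < A := by positivity
  have hAθ : A ^ θ = (2:ℝ) ^ (-(θ * s)) := by
    rw [hAdef, ← Real.rpow_intCast 2 (-(s:ℤ)),
      ← Real.rpow_mul (by norm_num : (0:ℝ) ≤ 2)]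
    congr 1
    push_cast
    ring
  set S := ∑' q : ℕ, vol q * a q ^ (1 - θ) with hSdef
  have hS : 0 ≤ S :=
    tsum_nonneg fun q => mul_nonneg (hvol q) (Real.rpow_nonneg (ha q) _)
  -- domination
  have hdom : ∀ b t : ℝ, 0 < b → 0 ≤ t → min b t ≤ max 1 t * b ^ (1 - θ) := by
    intro b t hb ht
    have hb1θ : (0:ℝ) ≤ b ^ (1 - θ) := Real.rpow_nonneg hb.le _
    rcases le_total b 1 with hb1 | hb1
    · calc min b t ≤ b := min_le_left _ _
        _ = b ^ (1:ℝ) := (Real.rpow_one b).symm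
        _ ≤ b ^ (1 - θ) := Real.rpow_le_rpow_of_exponent_ge hb hb1 (by linarith)
        _ ≤ max 1 t * b ^ (1 - θ) := le_mul_of_one_le_left hb1θ (le_max_left _ _)
    · have h1b : (1:ℝ) ≤ b ^ (1 - θ) := Real.one_le_rpow hb1 h1θ.le
      calc min b t ≤ t := min_le_right _ _
        _ ≤ max 1 t := le_max_right _ _
        _ = max 1 t * 1 := (mul_one _).symm
        _ ≤ max 1 t * b ^ (1 - θ) := by
            apply mul_le_mul_of_nonneg_left h1b
            exact le_trans zero_le_one (le_max_left _ _)
  have hmeas_v : AEMeasurable v (volume.restrict E) :=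
    hloc.aestronglyMeasurable.aemeasurable.restrict
  have hminInt : ∀ t : ℝ, 0 < t → IntegrableOn (fun x => min (v x) t) E volume := by
    intro t ht
    refine Integrable.mono (hint.const_mul (max 1 t))
      ((hmeas_v.min aemeasurable_const).aestronglyMeasurable) ?_
    refine Filter.Eventually.of_forall fun x => ?_
    have h1 : (0:ℝ) < min (v x) t := lt_min (hv x) ht
    have h2 : (0:ℝ) ≤ max 1 t * v x ^ (1 - θ) :=
      mul_nonneg (le_trans zero_le_one (le_max_left _ _)) (Real.rpow_nonneg (hv x).le _)
    rw [Real.norm_eq_abs, Real.norm_eq_abs, abs_of_pos h1, abs_of_nonneg h2]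
    exact hdom (v x) t (hv x) ht.le
  -- pointwise identity in x
  have hptA : ∀ x, (∫⁻ t in Set.Ioi (0:ℝ),
        ENNReal.ofReal (min (v x) t * t ^ (-θ - 1)))
      = ENNReal.ofReal (K * (v x) ^ (1 - θ)) := by
    intro x
    obtain ⟨hi, hval⟩ := aux_scale hθ0 hθ1 (hv x)
    have hnn : 0 ≤ᵐ[volume.restrict (Set.Ioi (0:ℝ))]
        fun t => min (v x) t * t ^ (-θ - 1) := by
      filter_upwards [ae_restrict_mem measurableSet_Ioi] with t ht
      exact mul_nonneg (le_min (hv x).le (le_of_lt ht)) (Real.rpow_nonneg (le_of_lt ht) _)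
    rw [← ofReal_integral_eq_lintegral_ofReal hi hnn, hval]
  -- product measurability
  have hprodmeas : AEMeasurable
      (Function.uncurry fun (x : EuclideanSpace ℝ (Fin n)) (t : ℝ) =>
        ENNReal.ofReal (min (v x) t * t ^ (-θ - 1)))
      ((volume.restrict E).prod (volume.restrict (Set.Ioi 0))) := by
    have h1 : AEMeasurable (fun p : EuclideanSpace ℝ (Fin n) × ℝ => v p.1)
        ((volume.restrict E).prod (volume.restrict (Set.Ioi 0))) :=
      hmeas_v.comp_quasiMeasurePreserving MeasureTheory.Measure.quasiMeasurePreserving_fst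
    have h2 : Measurable (fun p : EuclideanSpace ℝ (Fin n) × ℝ => p.2 ^ (-θ - 1)) :=
      measurable_snd.pow measurable_const
    exact ENNReal.measurable_ofReal.comp_aemeasurable
      ((h1.min measurable_snd.aemeasurable).mul h2.aemeasurable)
  have hswap : (∫⁻ x in E, ∫⁻ t in Set.Ioi (0:ℝ),
        ENNReal.ofReal (min (v x) t * t ^ (-θ - 1)))
      = ∫⁻ t in Set.Ioi (0:ℝ), ∫⁻ x in E,
        ENNReal.ofReal (min (v x) t * t ^ (-θ - 1)) :=
    lintegral_lintegral_swap hprodmeas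
  have hInner : ∀ t : ℝ, 0 < t →
      (∫⁻ x in E, ENNReal.ofReal (min (v x) t * t ^ (-θ - 1)))
        = ENNReal.ofReal (∫ x in E, min (v x) t) * ENNReal.ofReal (t ^ (-θ - 1)) := by
    intro t ht
    calc ∫⁻ x in E, ENNReal.ofReal (min (v x) t * t ^ (-θ - 1))
        = ∫⁻ x in E, ENNReal.ofReal (min (v x) t) * ENNReal.ofReal (t ^ (-θ - 1)) := by
          refine lintegral_congr fun x => ?_
          rw [ENNReal.ofReal_mul (le_min (hv x).le ht.le)]
      _ = (∫⁻ x in E, ENNReal.ofReal (min (v x) t)) * ENNReal.ofReal (t ^ (-θ - 1)) :=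
          lintegral_mul_const'' _ (ENNReal.measurable_ofReal.comp_aemeasurable
            (hmeas_v.min aemeasurable_const))
      _ = ENNReal.ofReal (∫ x in E, min (v x) t) * ENNReal.ofReal (t ^ (-θ - 1)) := by
          rw [ofReal_integral_eq_lintegral_ofReal (hminInt t ht)
            (Filter.Eventually.of_forall fun x => le_min (hv x).le ht.le)]
  have hMono : (∫⁻ t in Set.Ioi (0:ℝ), ∫⁻ x in E,
        ENNReal.ofReal (min (v x) t * t ^ (-θ - 1)))
      ≤ ∫⁻ t in Set.Ioi (0:ℝ),
          ENNReal.ofReal (c * ∑' q : ℕ, vol q * min (t * A) (a q)) *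
            ENNReal.ofReal (t ^ (-θ - 1)) := by
    refine lintegral_mono_ae ?_
    filter_upwards [ae_restrict_mem measurableSet_Ioi] with t ht
    rw [hInner t ht]
    exact mul_le_mul_left (ENNReal.ofReal_le_ofReal (hyp t ht)) _
  have hsumT : ∀ t : ℝ, 0 < t → Summable fun q : ℕ => vol q * min (t * A) (a q) := by
    intro t ht
    refine Summable.of_nonneg_of_le
      (fun q => mul_nonneg (hvol q) (le_min (mul_nonneg ht.le hA.le) (ha q)))
      (fun q => ?_) (hsum.mul_left (max 1 (t * A)))
    rcases eq_or_lt_of_le (ha q) with h | h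
    · rw [← h, min_eq_right (mul_nonneg ht.le hA.le), mul_zero,
        Real.zero_rpow h1θ.ne', mul_zero, mul_zero]
    · have hd := hdom (a q) (t * A) h (mul_nonneg ht.le hA.le)
      rw [min_comm] at hd
      calc vol q * min (t * A) (a q)
          ≤ vol q * (max 1 (t * A) * a q ^ (1 - θ)) :=
            mul_le_mul_of_nonneg_left hd (hvol q)
        _ = max 1 (t * A) * (vol q * a q ^ (1 - θ)) := by ring
  have hqmeas : ∀ q : ℕ, Measurable fun t : ℝ =>
      ENNReal.ofReal (vol q * min (t * A) (a q)) * ENNReal.ofReal (t ^ (-θ - 1)) := by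
    intro q
    have h1 : Measurable fun t : ℝ => min (t * A) (a q) :=
      (measurable_id.mul_const A).min measurable_const
    exact ((ENNReal.measurable_ofReal.comp (h1.const_mul (vol q))).mul
      (ENNReal.measurable_ofReal.comp ((measurable_id.pow measurable_const))))
  have hRHSeq : (∫⁻ t in Set.Ioi (0:ℝ),
        ENNReal.ofReal (c * ∑' q : ℕ, vol q * min (t * A) (a q)) *
          ENNReal.ofReal (t ^ (-θ - 1)))
      = ENNReal.ofReal c * ∑' q : ℕ, ∫⁻ t in Set.Ioi (0:ℝ),
          ENNReal.ofReal (vol q * min (t * A) (a q)) * ENNReal.ofReal (t ^ (-θ - 1)) := by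
    rw [← lintegral_tsum fun q => (hqmeas q).aemeasurable,
      ← lintegral_const_mul' _ _ ENNReal.ofReal_ne_top]
    refine lintegral_congr_ae ?_
    filter_upwards [ae_restrict_mem measurableSet_Ioi] with t ht
    rw [ENNReal.ofReal_mul hc,
      ENNReal.ofReal_tsum_of_nonneg
        (fun q => mul_nonneg (hvol q) (le_min (mul_nonneg (le_of_lt ht) hA.le) (ha q)))
        (hsumT t ht),
      mul_assoc, ← ENNReal.tsum_mul_right]
  have hTerm : ∀ q : ℕ, (∫⁻ t in Set.Ioi (0:ℝ),
        ENNReal.ofReal (vol q * min (t * A) (a q)) * ENNReal.ofReal (t ^ (-θ - 1)))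
      = ENNReal.ofReal (vol q * (A ^ θ * (K * a q ^ (1 - θ)))) := by
    intro q
    obtain ⟨hi, hval⟩ := aux_scale2 hθ0 hθ1 hA (ha q)
    have hnn : 0 ≤ᵐ[volume.restrict (Set.Ioi (0:ℝ))]
        fun t => min (t * A) (a q) * t ^ (-θ - 1) := by
      filter_upwards [ae_restrict_mem measurableSet_Ioi] with t ht
      exact mul_nonneg (le_min (mul_nonneg (le_of_lt ht) hA.le) (ha q))
        (Real.rpow_nonneg (le_of_lt ht) _)
    calc ∫⁻ t in Set.Ioi (0:ℝ),
          ENNReal.ofReal (vol q * min (t * A) (a q)) * ENNReal.ofReal (t ^ (-θ - 1))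
        = ∫⁻ t in Set.Ioi (0:ℝ),
            ENNReal.ofReal (vol q) * ENNReal.ofReal (min (t * A) (a q) * t ^ (-θ - 1)) := by
          refine lintegral_congr_ae ?_
          filter_upwards [ae_restrict_mem measurableSet_Ioi] with t ht
          rw [ENNReal.ofReal_mul (hvol q),
            ENNReal.ofReal_mul (le_min (mul_nonneg (le_of_lt ht) hA.le) (ha q)), mul_assoc]
      _ = ENNReal.ofReal (vol q) *
            ∫⁻ t in Set.Ioi (0:ℝ), ENNReal.ofReal (min (t * A) (a q) * t ^ (-θ - 1)) :=
          lintegral_const_mul' _ _ ENNReal.ofReal_ne_top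
      _ = ENNReal.ofReal (vol q) * ENNReal.ofReal (A ^ θ * (K * a q ^ (1 - θ))) := by
          rw [← ofReal_integral_eq_lintegral_ofReal hi hnn, hval]
      _ = ENNReal.ofReal (vol q * (A ^ θ * (K * a q ^ (1 - θ)))) :=
          (ENNReal.ofReal_mul (hvol q)).symm
  have hSum2 : Summable fun q : ℕ => vol q * (A ^ θ * (K * a q ^ (1 - θ))) :=
    Summable.congr (hsum.mul_left (A ^ θ * K)) (fun q => by ring)
  have hTsum : (∑' q : ℕ, ENNReal.ofReal (vol q * (A ^ θ * (K * a q ^ (1 - θ)))))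
      = ENNReal.ofReal (A ^ θ * K * S) := by
    rw [← ENNReal.ofReal_tsum_of_nonneg
      (fun q => mul_nonneg (hvol q) (mul_nonneg (Real.rpow_nonneg hA.le _)
        (mul_nonneg hKpos.le (Real.rpow_nonneg (ha q) _)))) hSum2]
    congr 1
    rw [hSdef, ← tsum_mul_left]
    exact tsum_congr fun q => by ring
  have hI1 : ENNReal.ofReal (K * ∫ x in E, v x ^ (1 - θ))
      = ∫⁻ x in E, ENNReal.ofReal (K * v x ^ (1 - θ)) := by
    rw [← integral_const_mul]
    exact ofReal_integral_eq_lintegral_ofReal (hint.const_mul K)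
      (Filter.Eventually.of_forall fun x =>
        mul_nonneg hKpos.le (Real.rpow_nonneg (hv x).le _))
  have hfinal : ENNReal.ofReal (K * ∫ x in E, v x ^ (1 - θ))
      ≤ ENNReal.ofReal (c * (A ^ θ * K * S)) := by
    calc ENNReal.ofReal (K * ∫ x in E, v x ^ (1 - θ))
        = ∫⁻ x in E, ENNReal.ofReal (K * v x ^ (1 - θ)) := hI1
      _ = ∫⁻ x in E, ∫⁻ t in Set.Ioi (0:ℝ),
            ENNReal.ofReal (min (v x) t * t ^ (-θ - 1)) :=
          lintegral_congr fun x => (hptA x).symm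
      _ = ∫⁻ t in Set.Ioi (0:ℝ), ∫⁻ x in E,
            ENNReal.ofReal (min (v x) t * t ^ (-θ - 1)) := hswap
      _ ≤ ∫⁻ t in Set.Ioi (0:ℝ),
            ENNReal.ofReal (c * ∑' q : ℕ, vol q * min (t * A) (a q)) *
              ENNReal.ofReal (t ^ (-θ - 1)) := hMono
      _ = ENNReal.ofReal c * ∑' q : ℕ, ∫⁻ t in Set.Ioi (0:ℝ),
            ENNReal.ofReal (vol q * min (t * A) (a q)) *
              ENNReal.ofReal (t ^ (-θ - 1)) := hRHSeq
      _ = ENNReal.ofReal c *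
            ∑' q : ℕ, ENNReal.ofReal (vol q * (A ^ θ * (K * a q ^ (1 - θ)))) := by
          rw [tsum_congr hTerm]
      _ = ENNReal.ofReal c * ENNReal.ofReal (A ^ θ * K * S) := by rw [hTsum]
      _ = ENNReal.ofReal (c * (A ^ θ * K * S)) := (ENNReal.ofReal_mul hc).symm
  have hreal : K * ∫ x in E, v x ^ (1 - θ) ≤ c * (A ^ θ * K * S) := by
    have hr : 0 ≤ c * (A ^ θ * K * S) :=
      mul_nonneg hc (mul_nonneg (mul_nonneg (Real.rpow_nonneg hA.le _) hKpos.le) hS)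
    exact (ENNReal.ofReal_le_ofReal_iff hr).mp hfinal
  rw [← hAθ]
  have hP : (0:ℝ) < A ^ θ := Real.rpow_pos_of_pos hA θ
  have hI2 : ∫ x in E, v x ^ (1 - θ) ≤ c * A ^ θ * S := by
    have := hreal
    nlinarith [hKpos]
  nlinarith [mul_nonneg (mul_nonneg hc hP.le) hS, hK1, hI2]
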